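/- With Q_{ij}(z) defined as the metric coefficients from e^{Az}, for every z ∈ ℝ and every p = (p₁, p₂) ∈ ℝ², the symmetric 2×2 matrix [[Q₂₂(z)+p₂², Q₁₂(z)-p₁p₂],[Q₁₂(z)-p₁p₂, Q₁₁(z)+p₁²]] is positive definite. -/

import Mathlib

/-- The matrix exponential `e^{Az}`. -/
noncomputable def expA (A : Matrix (Fin 2) (Fin 2) ℝ) (z : ℝ) : Matrix (Fin 2) (Fin 2) ℝ :=
  NormedSpace.exp (z • A)


/-- Metric coefficient `Q₁₁`. -/
noncomputable def Q11 (A : Matrix (Fin 2) (Fin 2) ℝ) (z : ℝ) : ℝ :=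
  Real.exp (-2 * z * A.trace) * ((expA A z 1 0) ^ 2 + (expA A z 1 1) ^ 2)

/-- Metric coefficient `Q₂₂`. -/
noncomputable def Q22 (A : Matrix (Fin 2) (Fin 2) ℝ) (z : ℝ) : ℝ :=
  Real.exp (-2 * z * A.trace) * ((expA A z 0 0) ^ 2 + (expA A z 0 1) ^ 2)

/-- Metric coefficient `Q₁₂`. -/
noncomputable def Q12 (A : Matrix (Fin 2) (Fin 2) ℝ) (z : ℝ) : ℝ :=
  -(Real.exp (-2 * z * A.trace) *
    ((expA A z 0 0) * (expA A z 1 0) + (expA A z 0 1) * (expA A z 1 1)))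

/-!
The matrix is the sum of `[[Q₂₂, Q₁₂], [Q₁₂, Q₁₁]] = e^{-2z·tr A} (J e^{Az}) (J e^{Az})ᵀ` with
`J = diag(1, -1)`, which is positive definite because `J e^{Az}` is invertible, and of the
rank-one positive semidefinite matrix `v vᵀ` with `v = (p₂, -p₁)`.
-/

open Matrix

theorem Matrix.PosDef.smul_mul_conjTranspose_self {n R : Type*} [Fintype n] [DecidableEq n]
    [CommRing R] [PartialOrder R] [StarRing R] [StarOrderedRing R] [NoZeroDivisors R]
    [PosSMulStrictMono R R] {B : Matrix n n R} (hB : IsUnit B) {c : R} (hc : 0 < c) :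
    (c • (B * Bᴴ)).PosDef :=
  (PosDef.mul_conjTranspose_self B (vecMul_injective_of_isUnit hB)).smul hc

theorem isUnit_diag_one_neg_one_mul_expA (A : Matrix (Fin 2) (Fin 2) ℝ) (z : ℝ) :
    IsUnit (!![1, 0; 0, -1] * expA A z) := by
  refine IsUnit.mul (IsUnit.of_mul_eq_one !![1, 0; 0, -1] ?_) (isUnit_exp (z • A))
  simp [one_fin_two]

theorem metricMatrix_eq_smul_mul_conjTranspose (A : Matrix (Fin 2) (Fin 2) ℝ) (z : ℝ) :
    !![Q22 A z, Q12 A z; Q12 A z, Q11 A z] = Real.exp (-2 * z * A.trace) •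
      ((!![1, 0; 0, -1] * expA A z) * (!![1, 0; 0, -1] * expA A z)ᴴ) := by
  rw [eta_fin_two (expA A z)]
  ext i j
  fin_cases i <;> fin_cases j <;>
    simp [Q11, Q12, Q22, vecMul, dotProduct, Fin.sum_univ_two] <;> ring

theorem mean_curvature_matrix_posDef (A : Matrix (Fin 2) (Fin 2) ℝ) (z : ℝ) (p₁ p₂ : ℝ) :
    (!![Q22 A z + p₂ ^ 2, Q12 A z - p₁ * p₂;
        Q12 A z - p₁ * p₂, Q11 A z + p₁ ^ 2]).PosDef := by
  have hsplit : !![Q22 A z + p₂ ^ 2, Q12 A z - p₁ * p₂; Q12 A z - p₁ * p₂, Q11 A z + p₁ ^ 2] =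
      !![Q22 A z, Q12 A z; Q12 A z, Q11 A z] + vecMulVec ![p₂, -p₁] (star ![p₂, -p₁]) := by
    ext i j
    fin_cases i <;> fin_cases j <;> simp <;> ring
  rw [hsplit, metricMatrix_eq_smul_mul_conjTranspose]
  exact (PosDef.smul_mul_conjTranspose_self (isUnit_diag_one_neg_one_mul_expA A z)
    (Real.exp_pos _)).add_posSemidef (posSemidef_vecMulVec_self_star _)
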